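/- Let L be a finite group, t = 2 and θ = id. Let n ≥ 3 be odd and let D_n = ⟨x, y | x² = 1 = yⁿ, x y x = y^{-1}⟩ be the dihedral group of order 2n. If there exists an injective group homomorphism ψ : D_n → L, then the twisted homogeneous rack C_{ψ(x)} of class (L, 2, id) is of type D. -/
import Mathlib


/-- A nonempty subset of `X` closed under the operation `op` (a subrack). -/
def IsSubrackOf {X : Type*} (op : X → X → X) (Y : Set X) : Prop :=
  Y.Nonempty ∧ ∀ a ∈ Y, ∀ b ∈ Y, op a b ∈ Y

/-- The rack with underlying set `C ⊆ X` and operation `op` is of type D: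
there is a decomposable subrack `R ⊔ S` of `C` and `r ∈ R`, `s ∈ S` with
`r ▹ (s ▹ (r ▹ s)) ≠ s`. -/
def IsTypeDOn {X : Type*} (op : X → X → X) (C : Set X) : Prop :=
  ∃ R S : Set X, R ⊆ C ∧ S ⊆ C ∧ IsSubrackOf op R ∧ IsSubrackOf op S ∧
    Disjoint R S ∧
    (∀ r ∈ R, ∀ s ∈ S, op r s ∈ S) ∧ (∀ s ∈ S, ∀ r ∈ R, op s r ∈ R) ∧
    ∃ r ∈ R, ∃ s ∈ S, op r (op s (op r s)) ≠ s

/-- The automorphism `u` of `L^t`: `u(ℓ₁, …, ℓ_t) = (θ(ℓ_t), ℓ₁, …, ℓ_{t-1})`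
(indices `0, …, t-1`, so coordinate `0` is `ℓ₁` and coordinate `t-1` is `ℓ_t`). -/
def thrU {L : Type*} [Group L] (θ : L ≃* L) (t : ℕ) (x : Fin t → L) : Fin t → L :=
  fun i => if (i : ℕ) = 0 then θ (x ⟨t - 1, by have := i.2; omega⟩)
    else x ⟨(i : ℕ) - 1, by have := i.2; omega⟩

/-- The rack operation `y ▹ z = y · u(z · y⁻¹)` on `L^t`. -/
def thrOp {L : Type*} [Group L] (θ : L ≃* L) (t : ℕ) (y z : Fin t → L) : Fin t → L :=
  y * thrU θ t (z * y⁻¹)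

/-- The element `(e, …, e, ℓ)` of `L^t`. -/
def thrBase {L : Type*} [Group L] (t : ℕ) (ℓ : L) : Fin t → L :=
  fun i => if (i : ℕ) = t - 1 then ℓ else 1

/-- The twisted conjugacy class (twisted homogeneous rack) of `x ∈ L^t`
with respect to `u`, i.e. the orbit of `x` under `g ⇀ x = g · x · u(g)⁻¹`. -/
def thrClassOf {L : Type*} [Group L] (θ : L ≃* L) (t : ℕ) (x : Fin t → L) :
    Set (Fin t → L) :=
  {y | ∃ g : Fin t → L, g * x * (thrU θ t g)⁻¹ = y}

/-- The twisted homogeneous rack `C_ℓ = C_{(e,…,e,ℓ)}` of class `(L, t, θ)`. -/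
def thrClass {L : Type*} [Group L] (θ : L ≃* L) (t : ℕ) (ℓ : L) : Set (Fin t → L) :=
  thrClassOf θ t (thrBase t ℓ)

/-- The twisted conjugacy class `O^{L,θ}_ℓ = {a·ℓ·θ(a)⁻¹ : a ∈ L}`. -/
def twConjClass {L : Type*} [Group L] (θ : L ≃* L) (ℓ : L) : Set L :=
  {k | ∃ a : L, a * ℓ * (θ a)⁻¹ = k}

namespace ThrAux

open DihedralGroup

lemma sr_inv {n : ℕ} (i : ZMod n) : (sr i : DihedralGroup n)⁻¹ = sr i :=
  inv_eq_of_mul_eq_one_right (sr_mul_self i)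

lemma r_inv {n : ℕ} (a : ZMod n) : (r a : DihedralGroup n)⁻¹ = r (-a) :=
  inv_eq_of_mul_eq_one_right (by rw [r_mul_r, add_neg_cancel]; exact one_def.symm)

lemma pair_ext {L : Type*} {a b c d : L} (h1 : a = c) (h2 : b = d) :
    (![a, b] : Fin 2 → L) = ![c, d] := by rw [h1, h2]

lemma thrOp_pair {L : Type*} [Group L] (y₁ y₂ z₁ z₂ : L) :
    thrOp (MulEquiv.refl L) 2 ![y₁, y₂] ![z₁, z₂] =
      ![y₁ * (z₂ * y₂⁻¹), y₂ * (z₁ * y₁⁻¹)] := by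
  funext i; fin_cases i <;> simp [thrOp, thrU]

lemma mem_thrClass_pair {L : Type*} [Group L] (ℓ p q c : L) (h : c * ℓ * c⁻¹ = p * q) :
    (![p, q] : Fin 2 → L) ∈ thrClass (MulEquiv.refl L) 2 ℓ := by
  have h' : p⁻¹ * (c * ℓ * c⁻¹) = q := by rw [h]; group
  refine ⟨![c, p⁻¹ * c], ?_⟩
  funext i; fin_cases i <;>
    simp only [thrU, thrBase, Pi.mul_apply, Pi.inv_apply] <;>
    norm_num <;> rw [← h'] <;> group

lemma conj_sr {n : ℕ} (hodd : Odd n) (k : ZMod n) :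
    ∃ c : DihedralGroup n, c * sr 0 * c⁻¹ = sr k := by
  obtain ⟨m, hm⟩ := hodd
  refine ⟨r (-((m + 1 : ℕ) * k)), ?_⟩
  rw [r_inv, r_mul_sr, sr_mul_r, neg_neg]
  congr 1
  have hn : ((n : ℕ) : ZMod n) = 0 := ZMod.natCast_self n
  have h1 : ((m + 1 : ℕ) : ZMod n) * k + (m + 1 : ℕ) * k = ((2 * m + 2 : ℕ) : ZMod n) * k := by
    push_cast; ring
  rw [zero_sub, neg_neg, h1]
  have h2 : ((2 * m + 2 : ℕ) : ZMod n) = 1 := by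
    have h3 : (2 * m + 2 : ℕ) = n + 1 := by omega
    rw [h3]; push_cast [hn]; ring
  rw [h2, one_mul]

end ThrAux
open DihedralGroup ThrAux in
/-- Lemma 3.10: `t = 2`, `θ = id`. If `n ≥ 3` is odd and there is a group
monomorphism `ψ : 𝔻_n → L` from the dihedral group of order `2n`, then
`C_{ψ(x)}` is of type D, where `x` is the distinguished reflection of `𝔻_n`. -/
theorem thrClass_isTypeD_t2_id_dihedral {L : Type*} [Group L] [Fintype L]
    (n : ℕ) (hn : 3 ≤ n) (hodd : Odd n)
    (ψ : DihedralGroup n →* L) (hψ : Function.Injective ψ) :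
    IsTypeDOn (thrOp (MulEquiv.refl L) 2)
      (thrClass (MulEquiv.refl L) 2 (ψ (DihedralGroup.sr 0))) := by
  haveI : NeZero n := ⟨by omega⟩
  set ℓ := ψ (sr 0) with hℓ
  refine ⟨{p | ∃ a i : ZMod n, p = ![ψ (r a), ψ (sr i)]},
          {p | ∃ i a : ZMod n, p = ![ψ (sr i), ψ (r a)]},
          ?_, ?_, ?_, ?_, ?_, ?_, ?_, ?_⟩
  · rintro p ⟨a, i, rfl⟩
    obtain ⟨c, hc⟩ := conj_sr hodd (i - a)
    refine mem_thrClass_pair ℓ _ _ (ψ c) ?_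
    simp only [hℓ, ← map_mul, ← map_inv]
    exact congrArg ψ (by rw [hc, r_mul_sr])
  · rintro p ⟨i, a, rfl⟩
    obtain ⟨c, hc⟩ := conj_sr hodd (i + a)
    refine mem_thrClass_pair ℓ _ _ (ψ c) ?_
    simp only [hℓ, ← map_mul, ← map_inv]
    exact congrArg ψ (by rw [hc, sr_mul_r])
  · refine ⟨⟨_, 0, 0, rfl⟩, ?_⟩
    rintro p ⟨a, i, rfl⟩ q ⟨b, j, rfl⟩
    refine ⟨a + i - j, i + b - a, ?_⟩
    rw [thrOp_pair]
    refine pair_ext ?_ ?_ <;> simp only [← map_mul, ← map_inv] <;>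
      refine congrArg ψ ?_ <;>
      simp only [sr_inv, r_inv, sr_mul_sr, r_mul_sr, sr_mul_r, r_mul_r] <;>
      congr 1 <;> ring
  · refine ⟨⟨_, 0, 0, rfl⟩, ?_⟩
    rintro p ⟨i, a, rfl⟩ q ⟨j, b, rfl⟩
    refine ⟨i + b - a, a + i - j, ?_⟩
    rw [thrOp_pair]
    refine pair_ext ?_ ?_ <;> simp only [← map_mul, ← map_inv] <;>
      refine congrArg ψ ?_ <;>
      simp only [sr_inv, r_inv, sr_mul_sr, r_mul_sr, sr_mul_r, r_mul_r] <;>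
      congr 1 <;> ring
  · rw [Set.disjoint_left]
    rintro p ⟨a, i, rfl⟩ ⟨j, b, hp⟩
    have h0 := congrFun hp 0
    simp only [Matrix.cons_val_zero] at h0
    exact absurd (hψ h0) (by simp)
  · rintro p ⟨a, i, rfl⟩ q ⟨j, b, rfl⟩
    refine ⟨i - b - a, j - a - i, ?_⟩
    rw [thrOp_pair]
    refine pair_ext ?_ ?_ <;> simp only [← map_mul, ← map_inv] <;>
      refine congrArg ψ ?_ <;>
      simp only [sr_inv, r_inv, sr_mul_sr, r_mul_sr, sr_mul_r, r_mul_r] <;>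
      congr 1 <;> ring
  · rintro p ⟨i, a, rfl⟩ q ⟨b, j, rfl⟩
    refine ⟨j - a - i, i - b - a, ?_⟩
    rw [thrOp_pair]
    refine pair_ext ?_ ?_ <;> simp only [← map_mul, ← map_inv] <;>
      refine congrArg ψ ?_ <;>
      simp only [sr_inv, r_inv, sr_mul_sr, r_mul_sr, sr_mul_r, r_mul_r] <;>
      congr 1 <;> ring
  · refine ⟨![ψ (r 0), ψ (sr 0)], ⟨0, 0, rfl⟩, ![ψ (sr 1), ψ (r 0)], ⟨1, 0, rfl⟩, ?_⟩
    have e1 : thrOp (MulEquiv.refl L) 2 ![ψ (r 0), ψ (sr 0)] ![ψ (sr 1), ψ (r 0)] =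
        ![ψ (sr 0), ψ (r 1)] := by
      rw [thrOp_pair]
      refine pair_ext ?_ ?_ <;> simp only [← map_mul, ← map_inv] <;>
        refine congrArg ψ ?_ <;>
        simp only [sr_inv, r_inv, sr_mul_sr, r_mul_sr, sr_mul_r, r_mul_r] <;>
        congr 1 <;> ring
    have e2 : thrOp (MulEquiv.refl L) 2 ![ψ (sr 1), ψ (r 0)] ![ψ (sr 0), ψ (r 1)] =
        ![ψ (sr 2), ψ (r 1)] := by
      rw [thrOp_pair]
      refine pair_ext ?_ ?_ <;> simp only [← map_mul, ← map_inv] <;>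
        refine congrArg ψ ?_ <;>
        simp only [sr_inv, r_inv, sr_mul_sr, r_mul_sr, sr_mul_r, r_mul_r] <;>
        congr 1 <;> ring
    have e3 : thrOp (MulEquiv.refl L) 2 ![ψ (r 0), ψ (sr 0)] ![ψ (sr 2), ψ (r 1)] =
        ![ψ (sr (-1)), ψ (r 2)] := by
      rw [thrOp_pair]
      refine pair_ext ?_ ?_ <;> simp only [← map_mul, ← map_inv] <;>
        refine congrArg ψ ?_ <;>
        simp only [sr_inv, r_inv, sr_mul_sr, r_mul_sr, sr_mul_r, r_mul_r] <;>
        congr 1 <;> ring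
    rw [e1, e2, e3]
    intro h
    have h0 := congrFun h 0
    simp only [Matrix.cons_val_zero] at h0
    have h1 : sr (-1 : ZMod n) = sr 1 := hψ h0
    have h2 : (-1 : ZMod n) = 1 := by injection h1
    have h3 : ((2 : ℕ) : ZMod n) = 0 := by push_cast; linear_combination -h2
    have h4 : n ∣ 2 := (ZMod.natCast_eq_zero_iff 2 n).mp h3
    exact absurd (Nat.le_of_dvd (by norm_num) h4) (by omega)
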